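/- arXiv:0808.1884 — 3 statements merged into one kernel-verified Lean document; each statement's English description precedes it below -/
import Mathlib

section
/- For all positive integers a, b, c and every perfect matching μ of the hexagonal mesh H_{2a,2b,2c}: every propeller contains exactly one edge of μ, and the multiset Ψ(μ) of squished non-propeller edges of μ is a 2-factor of H_{a,b,c}, i.e., it covers every vertex of H_{a,b,c} exactly twice. -/
open scoped Classical

/-- Vertices of the hexagonal mesh `H_{a,b,c}`: `true` = upward triangle
(coordinates summing to `a+b+c-1`), `false` = downward triangle
(coordinates summing to `a+b+c-2`).  The three coordinates measure the
position of the unit triangle in the three lattice directions of the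
dissection of the semiregular hexagon with sides `a,b,c,a,b,c` into unit
equilateral triangles. -/
def HexV (a b c : ℕ) : Type :=
  {v : Bool × Fin (a + b + c) × Fin (a + b + c) × Fin (a + b + c) //
    (v.2.1 : ℕ) < a + b ∧ (v.2.2.1 : ℕ) < b + c ∧ (v.2.2.2 : ℕ) < a + c ∧
    (v.2.1 : ℕ) + (v.2.2.1 : ℕ) + (v.2.2.2 : ℕ) + 2 = a + b + c + cond v.1 1 0}

namespace HexV

variable {a b c : ℕ}

instance : DecidableEq (HexV a b c) := by unfold HexV; infer_instance
instance : Fintype (HexV a b c) := by unfold HexV; infer_instance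

/-- Is the vertex an upward triangle? -/
def up (v : HexV a b c) : Bool := v.1.1
/-- First coordinate. -/
def I (v : HexV a b c) : ℕ := v.1.2.1
/-- Second coordinate. -/
def J (v : HexV a b c) : ℕ := v.1.2.2.1
/-- Third coordinate. -/
def K (v : HexV a b c) : ℕ := v.1.2.2.2

end HexV

/-- The hexagonal mesh `H_{a,b,c}` (the bipartite adjacency graph of the unit
triangles of the hexagon): an upward and a downward triangle are adjacent
(share an edge) iff the downward one's coordinates are componentwise at most
the upward one's. -/
def hexGraph (a b c : ℕ) : SimpleGraph (HexV a b c) where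
  Adj u w :=
    (u.up = true ∧ w.up = false ∧ w.I ≤ u.I ∧ w.J ≤ u.J ∧ w.K ≤ u.K) ∨
    (w.up = true ∧ u.up = false ∧ u.I ≤ w.I ∧ u.J ≤ w.J ∧ u.K ≤ w.K)
  symm := ⟨by intro u w h; tauto⟩
  loopless := ⟨by intro u h; rcases h with ⟨h1, h2, -⟩ | ⟨h1, h2, -⟩ <;> simp [h1] at h2⟩

/-- A propeller center of `H_{2a,2b,2c}`: a vertex all of whose coordinates
have the same parity.  The propeller consists of this vertex together with
its three incident edges; the propellers are pairwise vertex-disjoint and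
cover all vertices, and contracting each to a point yields `H_{a,b,c}` with
every edge doubled. -/
def IsCenter {a b c : ℕ} (v : HexV a b c) : Prop :=
  v.I % 2 = v.J % 2 ∧ v.J % 2 = v.K % 2

/-- An edge of one of the propellers, i.e. an edge incident to a center. -/
def IsPropellerEdge {a b c : ℕ} (e : Sym2 (HexV a b c)) : Prop :=
  ∃ v ∈ e, IsCenter v

/-- Auxiliary arithmetic lemma for `hexSq`. -/
theorem hexSq_aux {a b c : ℕ} (fl : Bool) (i j k : ℕ)
    (h1 : i < 2 * a + 2 * b) (h2 : j < 2 * b + 2 * c) (h3 : k < 2 * a + 2 * c)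
    (hs : i + j + k + 2 = 2 * a + 2 * b + 2 * c + cond fl 1 0) :
    i / 2 < a + b ∧ j / 2 < b + c ∧ k / 2 < a + c ∧
      i / 2 + j / 2 + k / 2 + 2
        = a + b + c + cond (decide (i % 2 + j % 2 + k % 2 ≤ 1)) 1 0 := by
  by_cases hp : i % 2 + j % 2 + k % 2 ≤ 1
  · rw [decide_eq_true hp]
    cases fl <;> simp only [cond_true, cond_false] at hs ⊢ <;> omega
  · rw [decide_eq_false hp]
    cases fl <;> simp only [cond_true, cond_false] at hs ⊢ <;> omega

/-- The squishing map `ψ` on vertices, `H_{2a,2b,2c} → H_{a,b,c}`: halve all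
coordinates (rounding down).  It maps each propeller (center and tips) onto
a single vertex of `H_{a,b,c}` and is two-to-one on non-propeller edges. -/
def hexSq (a b c : ℕ) (v : HexV (2 * a) (2 * b) (2 * c)) : HexV a b c :=
  have hv := v.2
  ⟨(decide ((v.1.2.1 : ℕ) % 2 + (v.1.2.2.1 : ℕ) % 2 + (v.1.2.2.2 : ℕ) % 2 ≤ 1),
    ⟨(v.1.2.1 : ℕ) / 2, by omega⟩, ⟨(v.1.2.2.1 : ℕ) / 2, by omega⟩,
    ⟨(v.1.2.2.2 : ℕ) / 2, by omega⟩),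
    hexSq_aux v.1.1 v.1.2.1 v.1.2.2.1 v.1.2.2.2 hv.1 hv.2.1 hv.2.2.1 hv.2.2.2⟩

/-- The squished multiset `Ψ(M)` of a subgraph `M` of `H_{2a,2b,2c}`, recorded
by its multiplicity function: `PsiCount a b c M E` is the number of
non-propeller edges of `M` which squish to the edge `E` of `H_{a,b,c}`. -/
noncomputable def PsiCount (a b c : ℕ) (M : (hexGraph (2 * a) (2 * b) (2 * c)).Subgraph)
    (E : Sym2 (HexV a b c)) : ℕ :=
  Set.ncard {e | e ∈ M.edgeSet ∧ ¬IsPropellerEdge e ∧ Sym2.map (hexSq a b c) e = E}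

/-- A 2-factor of a graph `G`, recorded by its multiplicity function `m`:
every edge has multiplicity at most 2, only edges of `G` occur, and every
vertex is covered exactly twice. -/
def IsTwoFactor {V : Type*} [Fintype V] [DecidableEq V] (G : SimpleGraph V)
    (m : Sym2 V → ℕ) : Prop :=
  (∀ e, m e ≤ 2) ∧ (∀ e, 0 < m e → e ∈ G.edgeSet) ∧
  (∀ v : V, ∑ e ∈ Finset.univ.filter (fun e : Sym2 V => v ∈ e), m e = 2)

/-!
Halving the coordinates sends each propeller, a center together with its three neighbours,
onto a single vertex `V` of `H_{a,b,c}`, and these four vertices make up the whole fiber over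
`V`; an edge lies inside a fiber exactly when it is a propeller edge. A perfect matching
matches the center over `V` to one of its three neighbours, so the other two vertices of the
fiber are matched along non-propeller edges leaving the fiber. These two edges are exactly
the squished edges at `V`, so `V` is covered twice.
-/

open Finset

namespace HexV

variable {a b c : ℕ}

lemma I_lt (v : HexV a b c) : v.I < a + b := v.2.1
lemma J_lt (v : HexV a b c) : v.J < b + c := v.2.2.1
lemma K_lt (v : HexV a b c) : v.K < a + c := v.2.2.2.1

lemma sum_of_up {v : HexV a b c} (h : v.up = true) : v.I + v.J + v.K + 1 = a + b + c := by
  have hs := v.2.2.2.2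
  rw [show v.1.1 = true from h, cond_true] at hs
  simp only [I, J, K]
  omega

lemma sum_of_down {v : HexV a b c} (h : v.up = false) : v.I + v.J + v.K + 2 = a + b + c := by
  have hs := v.2.2.2.2
  rw [show v.1.1 = false from h, cond_false] at hs
  simp only [I, J, K]
  omega

/-- The orientation of a unit triangle is determined by its coordinate sum. -/
lemma ext_of_coords {u v : HexV a b c} (hI : u.I = v.I) (hJ : u.J = v.J) (hK : u.K = v.K) :
    u = v := by
  have hup : u.up = v.up := by
    cases hu : u.up <;> cases hv : v.up
    · rfl
    · have := sum_of_down hu; have := sum_of_up hv; omega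
    · have := sum_of_up hu; have := sum_of_down hv; omega
    · rfl
  exact Subtype.ext (Prod.ext hup (Prod.ext (Fin.ext hI) (Prod.ext (Fin.ext hJ) (Fin.ext hK))))

lemma exists_of_coords {i j k : ℕ} (hi : i < a + b) (hj : j < b + c) (hk : k < a + c)
    (hs : i + j + k + 1 = a + b + c ∨ i + j + k + 2 = a + b + c) :
    ∃ v : HexV a b c, v.I = i ∧ v.J = j ∧ v.K = k := by
  rcases hs with hs | hs
  · exact ⟨⟨(true, ⟨i, by omega⟩, ⟨j, by omega⟩, ⟨k, by omega⟩), hi, hj, hk,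
      by simp only [cond_true]; omega⟩, rfl, rfl, rfl⟩
  · exact ⟨⟨(false, ⟨i, by omega⟩, ⟨j, by omega⟩, ⟨k, by omega⟩), hi, hj, hk,
      by simp only [cond_false]; omega⟩, rfl, rfl, rfl⟩

end HexV

section Squish

variable {a b c : ℕ}

@[simp] lemma hexSq_I (v : HexV (2 * a) (2 * b) (2 * c)) : (hexSq a b c v).I = v.I / 2 := rfl
@[simp] lemma hexSq_J (v : HexV (2 * a) (2 * b) (2 * c)) : (hexSq a b c v).J = v.J / 2 := rfl
@[simp] lemma hexSq_K (v : HexV (2 * a) (2 * b) (2 * c)) : (hexSq a b c v).K = v.K / 2 := rfl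

lemma hexSq_up (v : HexV (2 * a) (2 * b) (2 * c)) :
    (hexSq a b c v).up = decide (v.I % 2 + v.J % 2 + v.K % 2 ≤ 1) := rfl

lemma hexSq_eq_iff {v : HexV (2 * a) (2 * b) (2 * c)} {V : HexV a b c} :
    hexSq a b c v = V ↔ v.I / 2 = V.I ∧ v.J / 2 = V.J ∧ v.K / 2 = V.K :=
  ⟨by rintro rfl; exact ⟨rfl, rfl, rfl⟩, fun ⟨hI, hJ, hK⟩ => HexV.ext_of_coords hI hJ hK⟩

lemma hexGraph_adj_of_le {u w : HexV a b c} (hne : u ≠ w) (hI : w.I ≤ u.I) (hJ : w.J ≤ u.J)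
    (hK : w.K ≤ u.K) : (hexGraph a b c).Adj u w := by
  refine Or.inl ?_
  cases hu : u.up <;> cases hw : w.up
  · have := HexV.sum_of_down hu; have := HexV.sum_of_down hw
    exact absurd (HexV.ext_of_coords (by omega) (by omega) (by omega)) hne
  · have := HexV.sum_of_down hu; have := HexV.sum_of_up hw
    omega
  · exact ⟨rfl, rfl, hI, hJ, hK⟩
  · have := HexV.sum_of_up hu; have := HexV.sum_of_up hw
    exact absurd (HexV.ext_of_coords (by omega) (by omega) (by omega)) hne

end Squish

section Propeller

variable {a b c : ℕ}

lemma hexSq_eq_of_adj_of_isCenter {x y : HexV (2 * a) (2 * b) (2 * c)} (hx : IsCenter x)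
    (h : (hexGraph (2 * a) (2 * b) (2 * c)).Adj x y) : hexSq a b c y = hexSq a b c x := by
  unfold IsCenter at hx
  rw [hexSq_eq_iff]
  simp only [hexSq_I, hexSq_J, hexSq_K]
  rcases h with ⟨hxu, hyd, _⟩ | ⟨hyu, hxd, _⟩
  · have := HexV.sum_of_up hxu; have := HexV.sum_of_down hyd; omega
  · have := HexV.sum_of_up hyu; have := HexV.sum_of_down hxd; omega

lemma isCenter_or_isCenter_of_adj_of_hexSq_eq {x y : HexV (2 * a) (2 * b) (2 * c)}
    (h : (hexGraph (2 * a) (2 * b) (2 * c)).Adj x y) (hf : hexSq a b c x = hexSq a b c y) :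
    IsCenter x ∨ IsCenter y := by
  have hup := congrArg HexV.up hf
  rw [hexSq_up, hexSq_up, decide_eq_decide] at hup
  obtain ⟨hI, hJ, hK⟩ := hexSq_eq_iff.mp hf
  simp only [hexSq_I, hexSq_J, hexSq_K] at hI hJ hK
  unfold IsCenter
  rcases h with ⟨hxu, hyd, _⟩ | ⟨hyu, hxd, _⟩
  · have := HexV.sum_of_up hxu; have := HexV.sum_of_down hyd; omega
  · have := HexV.sum_of_up hyu; have := HexV.sum_of_down hxd; omega

lemma eq_of_isCenter_of_hexSq_eq {x y : HexV (2 * a) (2 * b) (2 * c)} (hx : IsCenter x)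
    (hy : IsCenter y) (hf : hexSq a b c x = hexSq a b c y) : x = y := by
  have hup := congrArg HexV.up hf
  rw [hexSq_up, hexSq_up, decide_eq_decide] at hup
  obtain ⟨hI, hJ, hK⟩ := hexSq_eq_iff.mp hf
  simp only [hexSq_I, hexSq_J, hexSq_K] at hI hJ hK
  unfold IsCenter at hx hy
  exact HexV.ext_of_coords (by omega) (by omega) (by omega)

lemma exists_isCenter_hexSq_eq (V : HexV a b c) : ∃ x, IsCenter x ∧ hexSq a b c x = V := by
  have := V.I_lt; have := V.J_lt; have := V.K_lt
  cases hV : V.up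
  · have := HexV.sum_of_down hV
    obtain ⟨x, hI, hJ, hK⟩ := HexV.exists_of_coords (a := 2 * a) (b := 2 * b) (c := 2 * c)
      (i := 2 * V.I + 1) (j := 2 * V.J + 1) (k := 2 * V.K + 1)
      (by omega) (by omega) (by omega) (Or.inl (by omega))
    exact ⟨x, by unfold IsCenter; omega, hexSq_eq_iff.mpr (by omega)⟩
  · have := HexV.sum_of_up hV
    obtain ⟨x, hI, hJ, hK⟩ := HexV.exists_of_coords (a := 2 * a) (b := 2 * b) (c := 2 * c)
      (i := 2 * V.I) (j := 2 * V.J) (k := 2 * V.K)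
      (by omega) (by omega) (by omega) (Or.inr (by omega))
    exact ⟨x, by unfold IsCenter; omega, hexSq_eq_iff.mpr (by omega)⟩

/-- A vertex over `V` is determined by the parities of its coordinates, and the admissible
parity vectors are those with at most one odd entry (`V` upward) or at least two (`V` downward). -/
lemma card_hexSq_fiber (V : HexV a b c) : #{x | hexSq a b c x = V} = 4 := by
  let parity (x : HexV (2 * a) (2 * b) (2 * c)) : Fin 2 × Fin 2 × Fin 2 :=
    (⟨x.I % 2, by omega⟩, ⟨x.J % 2, by omega⟩, ⟨x.K % 2, by omega⟩)
  calc #{x | hexSq a b c x = V}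
      = #{ε : Fin 2 × Fin 2 × Fin 2 | decide ((ε.1 : ℕ) + ε.2.1 + ε.2.2 ≤ 1) = V.up} := by
        refine card_nbij parity ?_ ?_ ?_
        · intro x hx
          simp only [coe_filter, mem_univ, true_and, Set.mem_ofPred_eq] at hx ⊢
          rw [← hx]
          rfl
        · intro x hx y hy hxy
          simp only [coe_filter, mem_univ, true_and, Set.mem_ofPred_eq] at hx hy
          obtain ⟨hxI, hxJ, hxK⟩ := hexSq_eq_iff.mp hx
          obtain ⟨hyI, hyJ, hyK⟩ := hexSq_eq_iff.mp hy
          simp only [parity, Prod.mk.injEq, Fin.mk.injEq] at hxy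
          exact HexV.ext_of_coords (by omega) (by omega) (by omega)
        · rintro ⟨e₁, e₂, e₃⟩ hε
          simp only [coe_filter, mem_univ, true_and, Set.mem_ofPred_eq] at hε
          have := V.I_lt; have := V.J_lt; have := V.K_lt
          have := e₁.isLt; have := e₂.isLt; have := e₃.isLt
          have hs : (2 * V.I + e₁) + (2 * V.J + e₂) + (2 * V.K + e₃) + 1 = 2 * a + 2 * b + 2 * c ∨
              (2 * V.I + e₁) + (2 * V.J + e₂) + (2 * V.K + e₃) + 2 = 2 * a + 2 * b + 2 * c := by
            cases hV : V.up <;> rw [hV] at hε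
            · have := HexV.sum_of_down hV; simp only [decide_eq_false_iff_not] at hε; omega
            · have := HexV.sum_of_up hV; simp only [decide_eq_true_eq] at hε; omega
          obtain ⟨x, hI, hJ, hK⟩ :=
            HexV.exists_of_coords (by omega) (by omega) (by omega) hs
          refine ⟨x, ?_, ?_⟩
          · simp only [coe_filter, mem_univ, true_and, Set.mem_ofPred_eq]
            exact hexSq_eq_iff.mpr (by omega)
          · simp only [parity, Prod.mk.injEq, Fin.ext_iff]
            omega
    _ = 4 := by cases V.up <;> rfl

end Propeller

namespace SimpleGraph.Subgraph.IsPerfectMatching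

variable {α : Type*} {G : SimpleGraph α} {M : G.Subgraph}

lemma existsUnique_mem_edgeSet (hM : M.IsPerfectMatching) (v : α) :
    ∃! e, e ∈ M.edgeSet ∧ v ∈ e := by
  obtain ⟨w, hw, huniq⟩ := hM.1 (hM.2 v)
  refine ⟨s(v, w), ⟨hw, Sym2.mem_mk_left v w⟩, ?_⟩
  rintro e ⟨he, hv⟩
  obtain ⟨u, rfl⟩ := Sym2.mem_iff_exists.mp hv
  rw [huniq u he]

lemma exists_partner (hM : M.IsPerfectMatching) : ∃ p : α → α, ∀ x y, M.Adj x y ↔ y = p x := by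
  choose p hp using isPerfectMatching_iff.mp hM
  exact ⟨p, fun x y => ⟨(hp x).2 y, fun h => h ▸ (hp x).1⟩⟩

end SimpleGraph.Subgraph.IsPerfectMatching

section MatchingOverFibers

variable {α β : Type*} [Fintype α] [DecidableEq β] {G : SimpleGraph α} {M : G.Subgraph} {p : α → α}
  {f : α → β} {C : α → Prop}

/-- The vertices counted are those of the fiber other than `c` and its partner. -/
lemma card_filter_not_center_of_partner [DecidableEq α] (hp : ∀ x y, M.Adj x y ↔ y = p x)
    (hcp : ∀ x y, M.Adj x y → C x → f y = f x) {w : β} {c : α} (hc : C c) (hcw : f c = w)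
    (huniq : ∀ x, C x → f x = w → x = c) :
    #{x | f x = w ∧ ¬C x ∧ ¬C (p x)} = #{x | f x = w} - 2 := by
  have hadj (x : α) : M.Adj x (p x) := (hp x _).mpr rfl
  have hpp (x : α) : p (p x) = x := ((hp _ _).mp (hadj x).symm).symm
  have hfiber : ({x | f x = w ∧ ¬C x ∧ ¬C (p x)} : Finset α) =
      ({x | f x = w} : Finset α) \ {c, p c} := by
    ext x
    simp only [mem_filter, mem_univ, true_and, mem_sdiff, mem_insert, mem_singleton, not_or]
    constructor
    · rintro ⟨hx, hxC, hpxC⟩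
      exact ⟨hx, fun h => hxC (h ▸ hc), fun h => hpxC (by rwa [h, hpp])⟩
    · rintro ⟨hx, hxc, hxpc⟩
      refine ⟨hx, fun hxC => hxc (huniq x hxC hx), fun hpxC => hxpc ?_⟩
      rw [← huniq (p x) hpxC ((hcp _ _ (hadj x).symm hpxC).symm.trans hx), hpp]
  have hsub : ({c, p c} : Finset α) ⊆ ({x | f x = w} : Finset α) := by
    intro x hx
    simp only [mem_insert, mem_singleton] at hx
    rcases hx with rfl | rfl
    · simpa using hcw
    · simpa using (hcp _ _ (hadj c) hc).trans hcw
  rw [hfiber, card_sdiff_of_subset hsub, card_pair (hadj c).ne]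

/-- A matching edge that is not inside a single fiber has exactly one endpoint over `w`. -/
lemma card_matching_edges_not_center {P : Sym2 α → Prop} (hP : ∀ x y, P s(x, y) ↔ C x ∨ C y)
    (hp : ∀ x y, M.Adj x y ↔ y = p x) (hfib : ∀ x y, M.Adj x y → f x = f y → C x ∨ C y)
    (w : β) :
    #{e | e ∈ M.edgeSet ∧ ¬P e ∧ w ∈ e.map f} = #{x | f x = w ∧ ¬C x ∧ ¬C (p x)} := by
  symm
  refine card_bij (fun x _ => s(x, p x)) ?_ ?_ ?_
  · intro x hx
    simp only [mem_filter, mem_univ, true_and] at hx ⊢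
    obtain ⟨hxw, hxC, hpxC⟩ := hx
    refine ⟨(hp x _).mpr rfl, by rw [hP, not_or]; exact ⟨hxC, hpxC⟩, ?_⟩
    rw [Sym2.map_mk, ← hxw]
    exact Sym2.mem_mk_left _ _
  · intro x hx y hy hxy
    simp only [mem_filter, mem_univ, true_and] at hx hy
    rcases Sym2.eq_iff.mp hxy with ⟨h, -⟩ | ⟨hxy, -⟩
    · exact h
    · have hadj : M.Adj y x := (hp y x).mpr hxy
      exact absurd (hfib y x hadj (hy.1.trans hx.1.symm)) (not_or.mpr ⟨hy.2.1, hx.2.1⟩)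
  · intro e he
    induction e using Sym2.ind with | _ x y => ?_
    simp only [mem_filter, mem_univ, true_and] at he ⊢
    obtain ⟨hxy, hnC, hw⟩ := he
    obtain ⟨hxC, hyC⟩ := not_or.mp ((hP x y).not.mp hnC)
    have hy : y = p x := (hp x y).mp hxy
    have hx : x = p y := (hp y x).mp hxy.symm
    rw [Sym2.map_mk, Sym2.mem_iff] at hw
    rcases hw with hw | hw
    · exact ⟨x, ⟨hw.symm, hxC, hy ▸ hyC⟩, by rw [← hy]⟩
    · exact ⟨y, ⟨hw.symm, hyC, hx ▸ hxC⟩, by rw [← hx, Sym2.eq_swap]⟩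

end MatchingOverFibers

lemma isTwoFactor_of_sum_eq_two {V : Type*} [Fintype V] [DecidableEq V] {G : SimpleGraph V}
    {m : Sym2 V → ℕ} (hG : ∀ e, 0 < m e → e ∈ G.edgeSet)
    (hsum : ∀ v : V, ∑ e ∈ univ.filter (fun e : Sym2 V => v ∈ e), m e = 2) :
    IsTwoFactor G m := by
  refine ⟨fun e => ?_, hG, hsum⟩
  induction e using Sym2.ind with | _ u v => ?_
  calc m s(u, v) ≤ ∑ e ∈ univ.filter (fun e : Sym2 V => u ∈ e), m e :=
        single_le_sum (fun _ _ => Nat.zero_le _) (by simp)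
    _ = 2 := hsum u

lemma isPropellerEdge_mk {a b c : ℕ} (x y : HexV a b c) :
    IsPropellerEdge s(x, y) ↔ IsCenter x ∨ IsCenter y := by
  simp [IsPropellerEdge]

section PsiCount

variable {a b c : ℕ} (M : (hexGraph (2 * a) (2 * b) (2 * c)).Subgraph)

lemma psiCount_eq_card (E : Sym2 (HexV a b c)) :
    PsiCount a b c M E =
      #{e | e ∈ M.edgeSet ∧ ¬IsPropellerEdge e ∧ e.map (hexSq a b c) = E} := by
  rw [PsiCount, ← Set.ncard_coe_finset, coe_filter]
  simp only [mem_univ, true_and]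

lemma sum_psiCount_eq_card (V : HexV a b c) :
    ∑ E ∈ univ.filter (fun E : Sym2 (HexV a b c) => V ∈ E), PsiCount a b c M E =
      #{e | e ∈ M.edgeSet ∧ ¬IsPropellerEdge e ∧ V ∈ e.map (hexSq a b c)} := by
  rw [card_eq_sum_card_fiberwise (f := Sym2.map (hexSq a b c))
    (t := univ.filter (fun E : Sym2 (HexV a b c) => V ∈ E))
    fun e he => mem_filter.mpr ⟨mem_univ _, (mem_filter.mp he).2.2.2⟩]
  refine sum_congr rfl fun E hE => ?_
  rw [psiCount_eq_card, filter_filter]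
  congr 1
  refine filter_congr fun e _ => ?_
  simp only [mem_filter, mem_univ, true_and] at hE
  constructor
  · rintro ⟨hM, hP, rfl⟩
    exact ⟨⟨hM, hP, hE⟩, rfl⟩
  · rintro ⟨⟨hM, hP, -⟩, rfl⟩
    exact ⟨hM, hP, rfl⟩

/-- A non-propeller edge joins two different fibers, and halving the coordinates preserves
the componentwise order of its endpoints. -/
lemma mem_edgeSet_of_psiCount_pos {E : Sym2 (HexV a b c)} (h : 0 < PsiCount a b c M E) :
    E ∈ (hexGraph a b c).edgeSet := by
  rw [psiCount_eq_card, card_pos] at h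
  obtain ⟨e, he⟩ := h
  simp only [mem_filter, mem_univ, true_and] at he
  obtain ⟨hM, hP, rfl⟩ := he
  induction e using Sym2.ind with | _ x y => ?_
  have hadj := M.adj_sub hM
  have hne : hexSq a b c x ≠ hexSq a b c y := fun hf => hP <| by
    rcases isCenter_or_isCenter_of_adj_of_hexSq_eq hadj hf with h | h
    exacts [⟨x, Sym2.mem_mk_left x y, h⟩, ⟨y, Sym2.mem_mk_right x y, h⟩]
  rw [Sym2.map_mk, SimpleGraph.mem_edgeSet]
  rcases hadj with ⟨-, -, hI, hJ, hK⟩ | ⟨-, -, hI, hJ, hK⟩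
  · exact hexGraph_adj_of_le hne (Nat.div_le_div_right hI) (Nat.div_le_div_right hJ)
      (Nat.div_le_div_right hK)
  · exact (hexGraph_adj_of_le hne.symm (Nat.div_le_div_right hI) (Nat.div_le_div_right hJ)
      (Nat.div_le_div_right hK)).symm

end PsiCount

theorem psi_is_two_factor_general (a b c : ℕ)
    (M : (hexGraph (2 * a) (2 * b) (2 * c)).Subgraph) (hM : M.IsPerfectMatching) :
    (∀ v : HexV (2 * a) (2 * b) (2 * c), IsCenter v →
        ∃! e : Sym2 (HexV (2 * a) (2 * b) (2 * c)), e ∈ M.edgeSet ∧ v ∈ e) ∧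
    IsTwoFactor (hexGraph a b c) (PsiCount a b c M) := by
  obtain ⟨p, hp⟩ := hM.exists_partner
  refine ⟨fun v _ => hM.existsUnique_mem_edgeSet v,
    isTwoFactor_of_sum_eq_two (fun _ => mem_edgeSet_of_psiCount_pos M) fun V => ?_⟩
  obtain ⟨c₀, hc₀, rfl⟩ := exists_isCenter_hexSq_eq V
  rw [sum_psiCount_eq_card,
    card_matching_edges_not_center isPropellerEdge_mk hp
      (fun _ _ h => isCenter_or_isCenter_of_adj_of_hexSq_eq (M.adj_sub h)),
    card_filter_not_center_of_partner hp
      (fun _ _ h hx => hexSq_eq_of_adj_of_isCenter hx (M.adj_sub h)) hc₀ rfl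
      (fun _ hx hf => eq_of_isCenter_of_hexSq_eq hx hc₀ hf),
    card_hexSq_fiber]

/-- For every perfect matching `μ` of `H_{2a,2b,2c}`, every
propeller contains exactly one edge of `μ`, and the squished multiset `Ψ(μ)`
is a 2-factor of `H_{a,b,c}`. -/
theorem psi_is_two_factor (a b c : ℕ) (ha : 0 < a) (hb : 0 < b) (hc : 0 < c)
    (M : (hexGraph (2 * a) (2 * b) (2 * c)).Subgraph) (hM : M.IsPerfectMatching) :
    (∀ v : HexV (2 * a) (2 * b) (2 * c), IsCenter v →
        ∃! e : Sym2 (HexV (2 * a) (2 * b) (2 * c)), e ∈ M.edgeSet ∧ v ∈ e) ∧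
    IsTwoFactor (hexGraph a b c) (PsiCount a b c M) :=
  psi_is_two_factor_general a b c M hM
end

section
/- For all positive integers a, b, c, let λ be a 2-factor of H_{a,b,c} and let μ be a perfect matching of H_{2a,2b,2c} with Ψ(μ) = λ. If λ is the multiset union of two perfect matchings of H_{a,b,c} corresponding to 3D Young diagrams σ₁ and σ₂ contained in the box B_{a,b,c}, then n_p(π(μ)) = |σ₁| + |σ₂|, where π(μ) is the 3D Young diagram in the box B_{2a,2b,2c} corresponding to μ and n_p(π(μ)) is the number of its elements (i,j,k) with i ≡ k and j ≡ k modulo 2. In particular, n_p(π(μ)) depends only on λ. (This is a gauge-free form of the paper's Lemma 3: w_{p,1,1,1}(μ) corresponds to w_p(λ).) -/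
open scoped Classical

/-- A 3D Young diagram: a finite downward-closed subset of `ℕ³`. -/
def IsYoungDiagram3D (π : Finset (ℕ × ℕ × ℕ)) : Prop :=
  ∀ p ∈ π, ∀ q : ℕ × ℕ × ℕ, q.1 ≤ p.1 → q.2.1 ≤ p.2.1 → q.2.2 ≤ p.2.2 → q ∈ π

/-- Containment in the box `B_{a,b,c} = {0,…,a−1} × {0,…,b−1} × {0,…,c−1}`. -/
def InBox (a b c : ℕ) (π : Finset (ℕ × ℕ × ℕ)) : Prop :=
  ∀ p ∈ π, p.1 < a ∧ p.2.1 < b ∧ p.2.2 < c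

/-- Number of boxes of `π` in the column over `(x, y)` (in the `z`-direction). -/
def colZ (π : Finset (ℕ × ℕ × ℕ)) (x y : ℕ) : ℕ :=
  (π.filter fun p => p.1 = x ∧ p.2.1 = y).card

/-- Number of boxes of `π` in the column over `(y, z)` (in the `x`-direction). -/
def colX (π : Finset (ℕ × ℕ × ℕ)) (y z : ℕ) : ℕ :=
  (π.filter fun p => p.2.1 = y ∧ p.2.2 = z).card

/-- Number of boxes of `π` in the column over `(x, z)` (in the `y`-direction). -/
def colY (π : Finset (ℕ × ℕ × ℕ)) (x z : ℕ) : ℕ :=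
  (π.filter fun p => p.1 = x ∧ p.2.2 = z).card

/-- `u` (upward) and `d` (downward) form one of the dimers of the matching
associated to the 3D diagram `π`: the three cases correspond to the top,
`x`- and `y`-faces of the surface of `π` viewed under isometric projection
(each visible rhombic face of the diagram covers one upward and one downward
triangle of the hexagon). -/
def IsDimerOf (a b c : ℕ) (π : Finset (ℕ × ℕ × ℕ)) (u d : HexV a b c) : Prop :=
  (∃ x < a, ∃ y < b,
      u.I = b + x - y ∧ u.J = c + y - colZ π x y ∧ u.K = a - 1 - x + colZ π x y ∧
      d.I + 1 = u.I ∧ d.J = u.J ∧ d.K = u.K) ∨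
  (∃ y < b, ∃ z < c,
      u.I = b + colX π y z - y - 1 ∧ u.J = c + y - z ∧ u.K = a + z - colX π y z ∧
      d.I = u.I ∧ d.J + 1 = u.J ∧ d.K = u.K) ∨
  (∃ x < a, ∃ z < c,
      u.I = b + x - colY π x z ∧ u.J = c + colY π x z - z - 1 ∧ u.K = a + z - x ∧
      d.I = u.I ∧ d.J = u.J ∧ d.K + 1 = u.K)

/-- The matching of `H_{a,b,c}` associated to a 3D Young diagram `π`
contained in `B_{a,b,c}`, as a (spanning) subgraph of `hexGraph a b c`. -/
def matchingOf (a b c : ℕ) (π : Finset (ℕ × ℕ × ℕ)) : (hexGraph a b c).Subgraph where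
  verts := Set.univ
  Adj u w := (u.up = true ∧ w.up = false ∧ IsDimerOf a b c π u w) ∨
    (w.up = true ∧ u.up = false ∧ IsDimerOf a b c π w u)
  adj_sub := by
    rintro u w (⟨hu, hw, h⟩ | ⟨hw, hu, h⟩)
    · exact Or.inl ⟨hu, hw, by
        rcases h with ⟨x, -, y, -, h⟩ | ⟨y, -, z, -, h⟩ | ⟨x, -, z, -, h⟩ <;> omega⟩
    · exact Or.inr ⟨hw, hu, by
        rcases h with ⟨x, -, y, -, h⟩ | ⟨y, -, z, -, h⟩ | ⟨x, -, z, -, h⟩ <;> omega⟩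
  edge_vert := by intro _ _ _; trivial
  symm := ⟨by intro u w h; tauto⟩

/-- Number of boxes `(i,j,k)` of `π` with `i ≡ k` and `j ≡ k (mod 2)`
(colour `p` in the `ℤ₂ × ℤ₂` weighting). -/
def countP (π : Finset (ℕ × ℕ × ℕ)) : ℕ :=
  (π.filter fun p => (p.1 + p.2.2) % 2 = 0 ∧ (p.2.1 + p.2.2) % 2 = 0).card

/-!
Weight a lozenge whose two triangles have first coordinates differing by one (the top face of a
column) by the second coordinate of its upward triangle, and every other lozenge by `0`. In the
matching of `σ ⊆ B_{a,b,c}` the top face over the column `(x, y)` of height `h` has weight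
`c + y - h`, so the total weight is `S - |σ|` with `S = ∑_{x<a, y<b} (c + y)`. In the matching
`μ` of `π ⊆ B_{2a,2b,2c}` the top face over `(x, y)` is a propeller edge exactly when `x + y` is
odd; otherwise it squishes to a top face of weight `⌊(2c + y - h)/2⌋`, and adding the number of
`p`-coloured cubes of that column gives `c + ⌊y/2⌋`. Hence the weight pulled back along `Ψ` has
total `2S - n_p(π)` on `μ`, and since `Ψ(μ)` is the union of the two matchings of `σ₁` and `σ₂`,
comparing total weights gives `n_p(π) = |σ₁| + |σ₂|`.
-/

open Finset

lemma Finset.mem_iff_lt_card_of_isLowerSet {s : Finset ℕ} (hs : IsLowerSet (s : Set ℕ)) (k : ℕ) :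
    k ∈ s ↔ k < #s := by
  constructor
  · intro hk
    have : range (k + 1) ⊆ s := fun j hj => hs (Nat.lt_succ_iff.1 (mem_range.1 hj)) hk
    simpa using card_le_card this
  · intro hk
    by_contra hks
    have : s ⊆ range k := fun m hm =>
      mem_range.2 (lt_of_not_ge fun hkm => hks (hs hkm hm))
    exact (hk.trans_le ((card_le_card this).trans_eq (card_range k))).false

lemma Fin.sum_univ_prod_eq_sum_range {M : Type*} [AddCommMonoid M] {m n : ℕ}
    (f : ℕ → ℕ → M) :
    ∑ q : Fin m × Fin n, f q.1 q.2 = ∑ x ∈ range m, ∑ y ∈ range n, f x y := by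
  rw [Fintype.sum_prod_type]
  simp only [Fin.sum_univ_eq_sum_range (f _) n]
  exact Fin.sum_univ_eq_sum_range (fun x => ∑ y ∈ range n, f x y) m

lemma Finset.sum_range_two_mul {M : Type*} [AddCommMonoid M] (f : ℕ → M) (n : ℕ) :
    ∑ i ∈ range (2 * n), f i = ∑ i ∈ range n, (f (2 * i) + f (2 * i + 1)) := by
  induction n with
  | zero => simp
  | succ n ih => rw [Nat.mul_succ, sum_range_succ, sum_range_succ, ih, sum_range_succ, add_assoc]

lemma card_filter_range_parity (x y h : ℕ) :
    #((range h).filter fun k => (x + k) % 2 = 0 ∧ (y + k) % 2 = 0) =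
      if (x + y) % 2 = 0 then (if x % 2 = 0 then (h + 1) / 2 else h / 2) else 0 := by
  induction h with
  | zero => simp
  | succ n ih =>
    rw [range_add_one, filter_insert, apply_ite card, card_insert_of_notMem (by simp), ih]
    split_ifs <;> omega

section Columns

variable {π : Finset (ℕ × ℕ × ℕ)}

lemma colZ_eq_card_heights (x y : ℕ) :
    colZ π x y = #((π.filter fun p => p.1 = x ∧ p.2.1 = y).image fun p => p.2.2) := by
  refine (card_image_of_injOn ?_).symm
  rintro ⟨x₁, y₁, k₁⟩ h₁ ⟨x₂, y₂, k₂⟩ h₂ (hk : k₁ = k₂)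
  simp only [mem_coe, mem_filter] at h₁ h₂
  simp [h₁.2.1, h₁.2.2, h₂.2.1, h₂.2.2, hk]

lemma mem_iff_lt_colZ (hY : IsYoungDiagram3D π) (x y k : ℕ) :
    (x, y, k) ∈ π ↔ k < colZ π x y := by
  rw [colZ_eq_card_heights, ← Finset.mem_iff_lt_card_of_isLowerSet]
  · simp
  · rintro m k hk hm
    simp only [coe_image, coe_filter, Set.mem_image, Set.mem_ofPred_eq] at hm ⊢
    obtain ⟨⟨x', y', m'⟩, ⟨hp, rfl, rfl⟩, rfl⟩ := hm
    exact ⟨(x', y', k), ⟨hY _ hp _ le_rfl le_rfl hk, rfl, rfl⟩, rfl⟩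

lemma colZ_le {a b c : ℕ} (hB : InBox a b c π) (x y : ℕ) : colZ π x y ≤ c := by
  rw [colZ_eq_card_heights]
  refine (card_le_card fun k hk => ?_).trans (card_range c).le
  obtain ⟨p, hp, rfl⟩ := mem_image.1 hk
  exact mem_range.2 (hB p (mem_filter.1 hp).1).2.2

lemma colZ_anti (hY : IsYoungDiagram3D π) {x y x' y' : ℕ} (hx : x ≤ x') (hy : y ≤ y') :
    colZ π x' y' ≤ colZ π x y := by
  by_contra! h
  have := (mem_iff_lt_colZ hY x' y' _).2 h
  exact lt_irrefl _ ((mem_iff_lt_colZ hY x y _).1 (hY _ this _ hx hy le_rfl))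

lemma card_filter_eq_sum_colZ {A B C : ℕ} (hY : IsYoungDiagram3D π) (hB : InBox A B C π)
    (P : ℕ × ℕ × ℕ → Prop) [DecidablePred P] :
    #(π.filter P) = ∑ x ∈ range A, ∑ y ∈ range B,
      #((range (colZ π x y)).filter fun k => P (x, y, k)) := by
  rw [card_eq_sum_card_fiberwise (f := fun p => (p.1, p.2.1)) (t := range A ×ˢ range B)
    fun p hp => by simpa using (hB p (mem_filter.1 hp).1).imp_right And.left, sum_product]
  refine sum_congr rfl fun x _ => sum_congr rfl fun y _ => ?_
  refine card_nbij' (fun p => p.2.2) (fun k => (x, y, k)) ?_ ?_ ?_ ?_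
  · rintro ⟨x', y', k⟩ hp
    simp only [mem_coe, mem_filter, Prod.mk.injEq] at hp
    obtain ⟨⟨hp, hP⟩, rfl, rfl⟩ := hp
    simpa [(mem_iff_lt_colZ hY _ _ _).1 hp] using hP
  · intro k hk
    simp only [mem_coe, mem_filter, mem_range] at hk
    simpa [mem_iff_lt_colZ hY] using hk
  · rintro ⟨x', y', k⟩ hp
    simp only [mem_coe, mem_filter, Prod.mk.injEq] at hp
    simp [hp.2.1, hp.2.2]
  · intro k _
    rfl

end Columns

namespace HexV

variable {a b c : ℕ}

lemma ext {u w : HexV a b c} (hI : u.I = w.I) (hJ : u.J = w.J) (hK : u.K = w.K) :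
    u = w := by
  obtain ⟨⟨f, i, j, k⟩, hu⟩ := u
  obtain ⟨⟨f', i', j', k'⟩, hw⟩ := w
  simp only [I, J, K] at hI hJ hK
  obtain rfl : i = i' := Fin.ext hI
  obtain rfl : j = j' := Fin.ext hJ
  obtain rfl : k = k' := Fin.ext hK
  obtain rfl : f = f' := by cases f <;> cases f' <;> simp_all
  rfl

end HexV

section TopDimers

variable {a b c : ℕ}

/-- Upward triangle of the horizontal lozenge on top of column `(x, y)` of height `h`. -/
def topUp (x : Fin a) (y : Fin b) (h : ℕ) (hh : h ≤ c) : HexV a b c :=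
  ⟨(true, ⟨b + x - y, by omega⟩, ⟨c + y - h, by omega⟩, ⟨a - 1 - x + h, by omega⟩), by
    simp only [cond_true]; omega⟩

def topDown (x : Fin a) (y : Fin b) (h : ℕ) (hh : h ≤ c) : HexV a b c :=
  ⟨(false, ⟨b + x - y - 1, by omega⟩, ⟨c + y - h, by omega⟩, ⟨a - 1 - x + h, by omega⟩), by
    simp only [cond_false]; omega⟩

variable {x : Fin a} {y : Fin b} {h : ℕ} {hh : h ≤ c}

@[simp] lemma topUp_I : (topUp x y h hh).I = b + x - y := rfl
@[simp] lemma topUp_J : (topUp x y h hh).J = c + y - h := rfl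
@[simp] lemma topUp_K : (topUp x y h hh).K = a - 1 - x + h := rfl
@[simp] lemma topDown_I : (topDown x y h hh).I = b + x - y - 1 := rfl
@[simp] lemma topDown_J : (topDown x y h hh).J = c + y - h := rfl
@[simp] lemma topDown_K : (topDown x y h hh).K = a - 1 - x + h := rfl

def topEdge (π : Finset (ℕ × ℕ × ℕ)) (hB : InBox a b c π) (q : Fin a × Fin b) :
    Sym2 (HexV a b c) :=
  s(topUp q.1 q.2 _ (colZ_le hB q.1 q.2), topDown q.1 q.2 _ (colZ_le hB q.1 q.2))

variable {π : Finset (ℕ × ℕ × ℕ)}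

lemma topEdge_mem_edgeSet (hB : InBox a b c π) (q : Fin a × Fin b) :
    topEdge π hB q ∈ (matchingOf a b c π).edgeSet :=
  Or.inl ⟨rfl, rfl, Or.inl ⟨q.1, q.1.2, q.2, q.2.2, rfl, rfl, rfl, by simp; omega, rfl, rfl⟩⟩

lemma topEdge_injective (hY : IsYoungDiagram3D π) (hB : InBox a b c π) :
    Function.Injective (topEdge π hB) := by
  rintro ⟨x, y⟩ ⟨x', y'⟩ heq
  rcases Sym2.eq_iff.1 heq with ⟨hU, -⟩ | ⟨hU, -⟩
  -- Equal `I` gives `x - y = x' - y'`, so the heights are ordered by `colZ_anti`, and equal `J`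
  -- then forces `y = y'`.
  · have hI := congrArg HexV.I hU
    have hJ := congrArg HexV.J hU
    simp only [topUp_I, topUp_J] at hI hJ
    have := colZ_le hB x y
    have := colZ_le hB x' y'
    have hx : (x : ℕ) = x' := by
      rcases le_total (x : ℕ) x' with hxx | hxx
      · have := colZ_anti hY hxx (by omega : (y : ℕ) ≤ y'); omega
      · have := colZ_anti hY hxx (by omega : (y' : ℕ) ≤ y); omega
    ext <;> simp only <;> omega
  · exact absurd (congrArg HexV.up hU) (by simp [HexV.up, topUp, topDown])

lemma IsDimerOf.I_eq_or {u w : HexV a b c} (h : IsDimerOf a b c π u w) :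
    w.I = u.I ∨ w.I + 1 = u.I := by
  rcases h with ⟨x, -, y, -, h⟩ | ⟨y, -, z, -, h⟩ | ⟨x, -, z, -, h⟩ <;> omega

lemma exists_topEdge_eq (hB : InBox a b c π) {u w : HexV a b c}
    (hadj : (matchingOf a b c π).Adj u w) (hI : w.I + 1 = u.I) :
    ∃ q, topEdge π hB q = s(u, w) := by
  rcases hadj with ⟨-, -, hd⟩ | ⟨-, -, hd⟩
  · rcases hd with ⟨x, hx, y, hy, h₁, h₂, h₃, h₄, h₅, h₆⟩ | ⟨y, -, z, -, h⟩ | ⟨x, -, z, -, h⟩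
    · refine ⟨(⟨x, hx⟩, ⟨y, hy⟩), congrArg₂ (fun p q => s(p, q))
        (HexV.ext ?_ ?_ ?_) (HexV.ext ?_ ?_ ?_)⟩ <;> simp <;> omega
    · omega
    · omega
  · rcases hd.I_eq_or with h | h <;> omega

lemma matchingOf_adj_I {u w : HexV a b c} (hadj : (matchingOf a b c π).Adj u w) :
    u.I = w.I ∨ w.I + 1 = u.I ∨ u.I + 1 = w.I := by
  rcases hadj with ⟨-, -, hd⟩ | ⟨-, -, hd⟩ <;> rcases hd.I_eq_or with h | h <;> omega

/-- Every edge of the matching other than a top face joins triangles with equal `I`. -/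
theorem sum_edgeSet_matchingOf {M : Type*} [AddCommMonoid M] (hY : IsYoungDiagram3D π)
    (hB : InBox a b c π)
    (g : Sym2 (HexV a b c) → M) (hg : ∀ u w : HexV a b c, u.I = w.I → g s(u, w) = 0) :
    ∑ e ∈ univ.filter (· ∈ (matchingOf a b c π).edgeSet), g e = ∑ q, g (topEdge π hB q) := by
  rw [← sum_image fun q _ r _ h => topEdge_injective hY hB h]
  refine (sum_subset (fun e he => ?_) fun e he hne => ?_).symm
  · obtain ⟨q, -, rfl⟩ := mem_image.1 he
    simpa using topEdge_mem_edgeSet hB q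
  · induction e using Sym2.ind with
    | h u w =>
      have hadj : (matchingOf a b c π).Adj u w := by simpa using he
      rcases matchingOf_adj_I hadj with hI | hI | hI
      · exact hg u w hI
      · obtain ⟨q, hq⟩ := exists_topEdge_eq hB hadj hI
        exact absurd (mem_image.2 ⟨q, mem_univ _, hq⟩) hne
      · obtain ⟨q, hq⟩ := exists_topEdge_eq hB hadj.symm hI
        exact absurd (mem_image.2 ⟨q, mem_univ _, hq.trans Sym2.eq_swap⟩) hne

end TopDimers

section Weights

variable {a b c : ℕ}

def pairWt (u w : HexV a b c) : ℕ :=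
  if w.I + 1 = u.I ∧ w.J = u.J ∧ w.K = u.K then u.J else 0

def edgeWt : Sym2 (HexV a b c) → ℕ :=
  Sym2.lift ⟨fun u w => pairWt u w + pairWt w u, fun _ _ => add_comm _ _⟩

lemma edgeWt_mk (u w : HexV a b c) : edgeWt s(u, w) = pairWt u w + pairWt w u := rfl

lemma edgeWt_of_I_eq {u w : HexV a b c} (hI : u.I = w.I) : edgeWt s(u, w) = 0 := by
  rw [edgeWt_mk, pairWt, pairWt, if_neg (by omega), if_neg (by omega)]

lemma edgeWt_top {x : Fin a} {y : Fin b} {h : ℕ} {hh : h ≤ c} :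
    edgeWt s(topUp x y h hh, topDown x y h hh) = c + y - h := by
  rw [edgeWt_mk, pairWt, pairWt, if_pos (by simp; omega), if_neg (by simp; omega)]
  rfl

end Weights

section Squish

variable {a b c : ℕ}

noncomputable def psiPullback (f : Sym2 (HexV a b c) → ℕ)
    (e : Sym2 (HexV (2 * a) (2 * b) (2 * c))) : ℕ :=
  if IsPropellerEdge e then 0 else f (e.map (hexSq a b c))

lemma sum_mul_psiCount (M : (hexGraph (2 * a) (2 * b) (2 * c)).Subgraph)
    (f : Sym2 (HexV a b c) → ℕ) :
    ∑ E, f E * PsiCount a b c M E = ∑ e ∈ univ.filter (· ∈ M.edgeSet), psiPullback f e := by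
  set t := (univ.filter (· ∈ M.edgeSet)).filter fun e => ¬IsPropellerEdge e
  have hcount : ∀ E, PsiCount a b c M E = #(t.filter fun e => e.map (hexSq a b c) = E) := by
    intro E
    rw [PsiCount, Set.ncard_eq_toFinset_card', Set.toFinset_ofPred, filter_filter, filter_filter]
  calc ∑ E, f E * PsiCount a b c M E
      = ∑ E, ∑ e ∈ t with e.map (hexSq a b c) = E, f E := by
        simp only [hcount, sum_const, smul_eq_mul, mul_comm]
    _ = ∑ e ∈ t, f (e.map (hexSq a b c)) := sum_fiberwise' t _ f
    _ = _ := by simp only [t, sum_filter, psiPullback, ite_not]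

lemma psiPullback_edgeWt_of_I_eq {u w : HexV (2 * a) (2 * b) (2 * c)} (hI : u.I = w.I) :
    psiPullback edgeWt s(u, w) = 0 := by
  unfold psiPullback
  split_ifs
  · rfl
  · exact edgeWt_of_I_eq (by simp [hI])

variable {X : Fin (2 * a)} {Y : Fin (2 * b)} {h : ℕ} {hh : h ≤ 2 * c}

lemma isPropellerEdge_top_iff :
    IsPropellerEdge s(topUp X Y h hh, topDown X Y h hh) ↔ ((X : ℕ) + Y) % 2 = 1 := by
  constructor
  · rintro ⟨v, hv, h₁, h₂⟩
    rcases Sym2.mem_iff.1 hv with rfl | rfl <;> simp only [topUp_I, topUp_J, topUp_K,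
      topDown_I, topDown_J, topDown_K] at h₁ h₂ <;> omega
  · intro hodd
    by_cases hXh : ((X : ℕ) + h) % 2 = 0
    · exact ⟨_, Sym2.mem_mk_left _ _, by simp only [IsCenter, topUp_I, topUp_J, topUp_K]; omega⟩
    · exact ⟨_, Sym2.mem_mk_right _ _,
        by simp only [IsCenter, topDown_I, topDown_J, topDown_K]; omega⟩

lemma psiPullback_edgeWt_top : psiPullback edgeWt s(topUp X Y h hh, topDown X Y h hh) =
    if ((X : ℕ) + Y) % 2 = 0 then (2 * c + Y - h) / 2 else 0 := by
  rw [psiPullback, isPropellerEdge_top_iff]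
  split_ifs with hodd heven
  · omega
  · rfl
  · rw [Sym2.map_mk, edgeWt_mk, pairWt, pairWt, if_pos (by simp; omega), if_neg (by simp; omega)]
    simp
  · omega

end Squish

lemma sum_edgeWt_add_card {a b c : ℕ} {σ : Finset (ℕ × ℕ × ℕ)} (hY : IsYoungDiagram3D σ)
    (hB : InBox a b c σ) :
    ∑ e ∈ univ.filter (· ∈ (matchingOf a b c σ).edgeSet), edgeWt e + #σ =
      ∑ _x ∈ range a, ∑ y ∈ range b, (c + y) := by
  have hcard : #σ = ∑ x ∈ range a, ∑ y ∈ range b, colZ σ x y := by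
    simpa using card_filter_eq_sum_colZ hY hB fun _ => True
  rw [sum_edgeSet_matchingOf hY hB _ fun _ _ => edgeWt_of_I_eq]
  simp only [topEdge, edgeWt_top]
  rw [Fin.sum_univ_prod_eq_sum_range fun x y => c + y - colZ σ x y, hcard]
  simp only [← sum_add_distrib]
  refine sum_congr rfl fun x _ => sum_congr rfl fun y _ => ?_
  have := colZ_le hB x y
  omega

lemma sum_psiPullback_edgeWt_add_countP {a b c : ℕ} {π : Finset (ℕ × ℕ × ℕ)}
    (hY : IsYoungDiagram3D π) (hB : InBox (2 * a) (2 * b) (2 * c) π) :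
    ∑ e ∈ univ.filter (· ∈ (matchingOf (2 * a) (2 * b) (2 * c) π).edgeSet),
        psiPullback edgeWt e + countP π =
      ∑ x ∈ range (2 * a), ∑ y ∈ range (2 * b), if (x + y) % 2 = 0 then c + y / 2 else 0 := by
  rw [sum_edgeSet_matchingOf hY hB _ fun _ _ => psiPullback_edgeWt_of_I_eq, countP,
    card_filter_eq_sum_colZ hY hB]
  simp only [topEdge, psiPullback_edgeWt_top, card_filter_range_parity]
  rw [Fin.sum_univ_prod_eq_sum_range
    fun x y => if (x + y) % 2 = 0 then (2 * c + y - colZ π x y) / 2 else 0]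
  simp only [← sum_add_distrib]
  refine sum_congr rfl fun x _ => sum_congr rfl fun y _ => ?_
  have := colZ_le hB x y
  split_ifs <;> omega

lemma sum_range_two_mul_parity (a b c : ℕ) :
    ∑ x ∈ range (2 * a), ∑ y ∈ range (2 * b), (if (x + y) % 2 = 0 then c + y / 2 else 0) =
      2 * ∑ _x ∈ range a, ∑ y ∈ range b, (c + y) := by
  simp only [sum_range_two_mul, ← sum_add_distrib, mul_sum]
  refine sum_congr rfl fun x _ => sum_congr rfl fun y _ => ?_
  split_ifs <;> omega

theorem squish_p_weight_general (a b c : ℕ)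
    (σ₁ σ₂ : Finset (ℕ × ℕ × ℕ))
    (hσ₁ : IsYoungDiagram3D σ₁ ∧ InBox a b c σ₁)
    (hσ₂ : IsYoungDiagram3D σ₂ ∧ InBox a b c σ₂)
    (π : Finset (ℕ × ℕ × ℕ))
    (hπ : IsYoungDiagram3D π ∧ InBox (2 * a) (2 * b) (2 * c) π)
    (hΨ : ∀ E : Sym2 (HexV a b c),
      PsiCount a b c (matchingOf (2 * a) (2 * b) (2 * c) π) E =
        (if E ∈ (matchingOf a b c σ₁).edgeSet then 1 else 0) +
        (if E ∈ (matchingOf a b c σ₂).edgeSet then 1 else 0)) :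
    countP π = σ₁.card + σ₂.card := by
  have hweight : ∑ e ∈ univ.filter (· ∈ (matchingOf (2 * a) (2 * b) (2 * c) π).edgeSet),
        psiPullback edgeWt e =
      ∑ e ∈ univ.filter (· ∈ (matchingOf a b c σ₁).edgeSet), edgeWt e +
        ∑ e ∈ univ.filter (· ∈ (matchingOf a b c σ₂).edgeSet), edgeWt e := by
    rw [← sum_mul_psiCount]
    simp only [hΨ, mul_add, sum_add_distrib, mul_ite, mul_one, mul_zero, sum_filter]
  have h₁ := sum_edgeWt_add_card hσ₁.1 hσ₁.2
  have h₂ := sum_edgeWt_add_card hσ₂.1 hσ₂.2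
  have hπ' := sum_psiPullback_edgeWt_add_countP hπ.1 hπ.2
  rw [sum_range_two_mul_parity] at hπ'
  omega

/-- **Lemma 3 of the paper, gauge-free form.**  If the 2-factor
`Ψ(μ)` of a perfect matching `μ` of `H_{2a,2b,2c}` is the multiset union of
the two perfect matchings of `H_{a,b,c}` corresponding to 3D Young diagrams
`σ₁, σ₂ ⊆ B_{a,b,c}`, then `n_p(π(μ)) = |σ₁| + |σ₂|`, where `π(μ) ⊆ B_{2a,2b,2c}`
is the 3D Young diagram corresponding to `μ`. -/
theorem squish_p_weight (a b c : ℕ) (ha : 0 < a) (hb : 0 < b) (hc : 0 < c)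
    (σ₁ σ₂ : Finset (ℕ × ℕ × ℕ))
    (hσ₁ : IsYoungDiagram3D σ₁ ∧ InBox a b c σ₁)
    (hσ₂ : IsYoungDiagram3D σ₂ ∧ InBox a b c σ₂)
    (π : Finset (ℕ × ℕ × ℕ))
    (hπ : IsYoungDiagram3D π ∧ InBox (2 * a) (2 * b) (2 * c) π)
    (hΨ : ∀ E : Sym2 (HexV a b c),
      PsiCount a b c (matchingOf (2 * a) (2 * b) (2 * c) π) E =
        (if E ∈ (matchingOf a b c σ₁).edgeSet then 1 else 0) +
        (if E ∈ (matchingOf a b c σ₂).edgeSet then 1 else 0)) :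
    countP π = σ₁.card + σ₂.card :=
  squish_p_weight_general a b c σ₁ σ₂ hσ₁ hσ₂ π hπ hΨ
end

section
/- As formal power series in p, the following identity holds: M(1,p⁴)⁴ · (M(p²,p⁴)·M(p^{−2},p⁴))³ = M(1,p) · (M(−p,p⁴)·M(−p^{−1},p⁴))³ · M(−p³,p⁴)·M(−p^{−3},p⁴), where M(a,z) = ∏_{n≥1}(1 − a z^n)^{−n}. (This is the statement that the ℤ₂×ℤ₂ Donaldson–Thomas partition function of Equation (1.2), specialized at p = q = r = s, equals the monochromatic partition function M(1,p).) -/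
open scoped Classical

/-- `F` is the infinite product of the formal power series `f 0, f 1, f 2, …`:
every coefficient of the partial products eventually stabilizes to the
corresponding coefficient of `F` (coefficientwise, i.e. `X`-adic,
convergence of the partial products). -/
def PSHasProd (f : ℕ → PowerSeries ℤ) (F : PowerSeries ℤ) : Prop :=
  ∀ k : ℕ, ∃ N₀ : ℕ, ∀ N ≥ N₀,
    PowerSeries.coeff k (∏ n ∈ Finset.range N, f n) = PowerSeries.coeff k F

/-! Write `u m = (1 - X ^ m)⁻¹` and `v m = (1 + X ^ m)⁻¹`. The left side is `∏ u m ^ a m` with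
`a m = m` for `m ≡ 0 [MOD 4]` and `a m = 3 m / 2` for `m ≡ 2 [MOD 4]`; the right side is
`∏ u m ^ m * ∏_{m odd} v m ^ m`. Since `u m * v m = u (2 m)`, the odd part of the right side becomes
`∏_{m odd} u (2 m) ^ m`, which supplies the missing exponent `m / 2` at every `m ≡ 2 [MOD 4]`.
Modulo `X ^ K` only the factors with `m < K` survive, so both sides become finite products and the
identity reduces to a comparison of exponents. -/

open Finset PowerSeries Filter

theorem Finset.prod_range_pow_affine {M : Type*} [CommMonoid M] {W : ℕ → M} {K : ℕ}
    (hW : ∀ m, K ≤ m → W m = 1) (e : ℕ → ℕ) (c d : ℕ) (hc : 0 < c) {N : ℕ} (hN : K ≤ N) :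
    ∏ n ∈ range N, W (c * n + d) ^ e n =
      ∏ m ∈ range K, W m ^ (if d ≤ m ∧ c ∣ m - d then e ((m - d) / c) else 0) := by
  have lt_of_ne_one {m : ℕ} {k : ℕ} (h : W m ^ k ≠ 1) : m < K := by
    by_contra! hm
    rw [hW m hm, one_pow] at h
    exact h rfl
  refine prod_bij_ne_one (fun n _ _ => c * n + d) (fun n _ h => mem_range.2 (lt_of_ne_one h))
    (fun n₁ _ _ n₂ _ _ h => by simpa [hc.ne'] using h) (fun m hm h => ?_) (fun n _ _ => ?_)
  · have hmem : d ≤ m ∧ c ∣ m - d := by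
      by_contra hd
      rw [if_neg hd, pow_zero] at h
      exact h rfl
    obtain ⟨j, hj⟩ := hmem.2
    refine ⟨j, mem_range.2 ?_, ?_, by omega⟩
    · have := mem_range.1 hm
      have := Nat.le_mul_of_pos_left j hc
      omega
    · rw [show c * j + d = m by omega]
      rwa [if_pos hmem, hj, Nat.mul_div_cancel_left _ hc] at h
  · simp [Nat.mul_div_cancel_left _ hc]

namespace PowerSeries

variable {R : Type*} [CommRing R]

theorem eq_of_forall_mk_span_X_pow_succ_eq {A B : R⟦X⟧}
    (h : ∀ k, Ideal.Quotient.mk (Ideal.span {(X : R⟦X⟧) ^ (k + 1)}) A = Ideal.Quotient.mk _ B) :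
    A = B := by
  ext k
  have hdvd : X ^ (k + 1) ∣ A - B :=
    Ideal.mem_span_singleton.1 (Ideal.Quotient.eq.1 (h k))
  simpa [sub_eq_zero] using X_pow_dvd_iff.1 hdvd k k.lt_succ_self

theorem mk_span_X_pow_X_pow_eq_zero {K m : ℕ} (h : K ≤ m) :
    Ideal.Quotient.mk (Ideal.span {(X : R⟦X⟧) ^ K}) (X ^ m) = 0 :=
  Ideal.Quotient.eq_zero_iff_mem.2 (Ideal.mem_span_singleton.2 (pow_dvd_pow X h))

theorem map_invOfUnit_eq_one {S : Type*} [Semiring S] (f : R⟦X⟧ →+* S) {φ : R⟦X⟧}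
    (hφ : constantCoeff φ = 1) (h : f φ = 1) : f (invOfUnit φ 1) = 1 := by
  calc f (invOfUnit φ 1) = f φ * f (invOfUnit φ 1) := by rw [h, one_mul]
    _ = 1 := by rw [← map_mul, mul_invOfUnit φ 1 (by simpa), map_one]

theorem mk_span_X_pow_invOfUnit_one_sub_X_pow {K m : ℕ} (h : K ≤ m) (hm : m ≠ 0) :
    Ideal.Quotient.mk (Ideal.span {(X : R⟦X⟧) ^ K}) (invOfUnit (1 - X ^ m) 1) = 1 :=
  map_invOfUnit_eq_one _ (by simp [hm]) <| by
    rw [map_sub, map_one, mk_span_X_pow_X_pow_eq_zero h, sub_zero]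

theorem mk_span_X_pow_invOfUnit_one_add_X_pow {K m : ℕ} (h : K ≤ m) (hm : m ≠ 0) :
    Ideal.Quotient.mk (Ideal.span {(X : R⟦X⟧) ^ K}) (invOfUnit (1 + X ^ m) 1) = 1 :=
  map_invOfUnit_eq_one _ (by simp [hm]) <| by
    rw [map_add, map_one, mk_span_X_pow_X_pow_eq_zero h, add_zero]

theorem invOfUnit_one_sub_X_pow_mul_invOfUnit_one_add_X_pow {m : ℕ} (hm : m ≠ 0) :
    invOfUnit (1 - X ^ m : R⟦X⟧) 1 * invOfUnit (1 + X ^ m) 1 = invOfUnit (1 - X ^ (2 * m)) 1 := by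
  refine left_inv_eq_right_inv (a := 1 - X ^ (2 * m)) ?_ (mul_invOfUnit _ 1 (by simp [hm]))
  calc invOfUnit (1 - X ^ m : R⟦X⟧) 1 * invOfUnit (1 + X ^ m) 1 * (1 - X ^ (2 * m))
      = ((1 - X ^ m) * invOfUnit (1 - X ^ m) 1) * ((1 + X ^ m) * invOfUnit (1 + X ^ m) 1) := by
        ring
    _ = 1 := by rw [mul_invOfUnit _ 1 (by simp [hm]), mul_invOfUnit _ 1 (by simp [hm]), one_mul]

end PowerSeries

theorem PSHasProd.eventually_mk_prod_eq {f : ℕ → PowerSeries ℤ} {F : PowerSeries ℤ}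
    (h : PSHasProd f F) (K : ℕ) :
    ∀ᶠ N in atTop, Ideal.Quotient.mk (Ideal.span {(X : PowerSeries ℤ) ^ K})
      (∏ n ∈ range N, f n) = Ideal.Quotient.mk _ F := by
  have hcoeff : ∀ᶠ N in atTop, ∀ j ∈ range K, coeff j (∏ n ∈ range N, f n) = coeff j F :=
    (eventually_all_finset _).2 fun j _ => eventually_atTop.2 (h j)
  filter_upwards [hcoeff] with N hN
  refine Ideal.Quotient.eq.2 (Ideal.mem_span_singleton.2 (X_pow_dvd_iff.2 fun j hj => ?_))
  rw [map_sub, hN j (mem_range.2 hj), sub_self]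

def z2z2Exponent (m : ℕ) : ℕ := if m % 4 = 0 then m else if m % 4 = 2 then 3 * m / 2 else 0

section
variable {M : Type*} [CommMonoid M] {K N : ℕ} {u v : ℕ → M}

theorem z2z2_prod_eq_prod_pow_z2z2Exponent (hu : ∀ m, K ≤ m → u m = 1) (hN : K ≤ N) :
    (∏ n ∈ range N, u (4 * n + 4) ^ (n + 1)) ^ 4 *
        ((∏ n ∈ range N, u (4 * n + 6) ^ (n + 1)) * ∏ n ∈ range N, u (4 * n + 2) ^ (n + 1)) ^ 3 =
      ∏ m ∈ range K, u m ^ z2z2Exponent m := by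
  rw [prod_range_pow_affine hu (· + 1) 4 4 four_pos hN,
    prod_range_pow_affine hu (· + 1) 4 6 four_pos hN,
    prod_range_pow_affine hu (· + 1) 4 2 four_pos hN]
  simp only [← prod_pow, ← pow_mul, ← prod_mul_distrib, ← pow_add]
  refine prod_congr rfl fun m _ => congrArg (u m ^ ·) ?_
  unfold z2z2Exponent
  split_ifs <;> omega

theorem macmahon_signed_prod_eq_prod_pow_odd (hv : ∀ m, K ≤ m → v m = 1) (hN : K ≤ N) :
    ((∏ n ∈ range N, v (4 * n + 5) ^ (n + 1)) * ∏ n ∈ range N, v (4 * n + 3) ^ (n + 1)) ^ 3 *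
        ((∏ n ∈ range N, v (4 * n + 7) ^ (n + 1)) * ∏ n ∈ range N, v (4 * n + 1) ^ (n + 1)) =
      ∏ m ∈ range K, v m ^ (if m % 2 = 1 then m else 0) := by
  rw [prod_range_pow_affine hv (· + 1) 4 5 four_pos hN,
    prod_range_pow_affine hv (· + 1) 4 3 four_pos hN,
    prod_range_pow_affine hv (· + 1) 4 7 four_pos hN,
    prod_range_pow_affine hv (· + 1) 4 1 four_pos hN]
  simp only [← prod_pow, ← pow_mul, ← prod_mul_distrib, ← pow_add]
  refine prod_congr rfl fun m _ => congrArg (v m ^ ·) ?_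
  split_ifs <;> omega

theorem prod_pow_self_mul_prod_pow_odd_eq (hu : ∀ m, K ≤ m → u m = 1)
    (huv : ∀ m, 0 < m → u m * v m = u (2 * m)) :
    (∏ m ∈ range K, u m ^ m) * ∏ m ∈ range K, v m ^ (if m % 2 = 1 then m else 0) =
      ∏ m ∈ range K, u m ^ z2z2Exponent m := by
  -- `2 * m + 0` is the affine shape that `prod_range_pow_affine` reindexes.
  have hsplit : ∀ m ∈ range K, u m ^ m * v m ^ (if m % 2 = 1 then m else 0) =
      u m ^ (if m % 2 = 0 then m else 0) * u (2 * m + 0) ^ (if m % 2 = 1 then m else 0) := by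
    intro m _
    rcases Nat.mod_two_eq_zero_or_one m with h | h
    · simp [h]
    · simp [h, ← huv m (by omega), mul_pow]
  rw [← prod_mul_distrib, prod_congr rfl hsplit, prod_mul_distrib,
    prod_range_pow_affine hu _ 2 0 two_pos le_rfl, ← prod_mul_distrib]
  refine prod_congr rfl fun m _ => ?_
  rw [← pow_add]
  unfold z2z2Exponent
  congr 1
  split_ifs <;> omega

theorem z2z2_prod_eq_macmahon_prod (hu : ∀ m, K ≤ m → u m = 1) (hv : ∀ m, K ≤ m → v m = 1)
    (huv : ∀ m, 0 < m → u m * v m = u (2 * m)) (hN : K ≤ N) :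
    (∏ n ∈ range N, u (4 * n + 4) ^ (n + 1)) ^ 4 *
        ((∏ n ∈ range N, u (4 * n + 6) ^ (n + 1)) * ∏ n ∈ range N, u (4 * n + 2) ^ (n + 1)) ^ 3 =
      (∏ n ∈ range N, u (n + 1) ^ (n + 1)) *
        ((∏ n ∈ range N, v (4 * n + 5) ^ (n + 1)) * ∏ n ∈ range N, v (4 * n + 3) ^ (n + 1)) ^ 3 *
        ((∏ n ∈ range N, v (4 * n + 7) ^ (n + 1)) * ∏ n ∈ range N, v (4 * n + 1) ^ (n + 1)) := by
  have hsucc : ∏ n ∈ range N, u (n + 1) ^ (n + 1) = ∏ m ∈ range K, u m ^ m := by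
    have h := prod_range_pow_affine hu (· + 1) 1 1 one_pos hN
    simp only [one_mul, Nat.one_dvd, and_true, Nat.div_one] at h
    rw [h]
    refine prod_congr rfl fun m _ => congrArg (u m ^ ·) ?_
    split_ifs <;> omega
  rw [z2z2_prod_eq_prod_pow_z2z2Exponent hu hN, mul_assoc,
    macmahon_signed_prod_eq_prod_pow_odd hv hN, hsucc, prod_pow_self_mul_prod_pow_odd_eq hu huv]

end

open PowerSeries in
/-- The `ℤ₂×ℤ₂` Donaldson–Thomas partition function of
Equation (1.2), specialized at `p = q = r = s`, equals `M(1,p)`: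
`M(1,p⁴)⁴·(M(p²,p⁴)M(p⁻²,p⁴))³ = M(1,p)·(M(−p,p⁴)M(−p⁻¹,p⁴))³·M(−p³,p⁴)M(−p⁻³,p⁴)`,
where `M(a,z) = ∏_{n≥1}(1−az^n)^{−n}` and the infinite products are taken in
the sense of coefficientwise convergence (`PSHasProd`).  Here
`M1 = M(1,p⁴)`, `M2 = M(p²,p⁴)`, `M3 = M(p⁻²,p⁴)`, `M4 = M(1,p)`,
`M5 = M(−p,p⁴)`, `M6 = M(−p⁻¹,p⁴)`, `M7 = M(−p³,p⁴)`, `M8 = M(−p⁻³,p⁴)`;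
the `n`-th factor (for `n ≥ 1`) of e.g. `M(p⁻²,p⁴)` is `(1−p^{4n−2})^{−n}`. -/
theorem z2z2_specializes_to_macmahon {M1 M2 M3 M4 M5 M6 M7 M8 : PowerSeries ℤ}
    (h1 : PSHasProd (fun n => (invOfUnit (1 - (X : PowerSeries ℤ) ^ (4 * n + 4)) 1) ^ (n + 1)) M1)
    (h2 : PSHasProd (fun n => (invOfUnit (1 - (X : PowerSeries ℤ) ^ (4 * n + 6)) 1) ^ (n + 1)) M2)
    (h3 : PSHasProd (fun n => (invOfUnit (1 - (X : PowerSeries ℤ) ^ (4 * n + 2)) 1) ^ (n + 1)) M3)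
    (h4 : PSHasProd (fun n => (invOfUnit (1 - (X : PowerSeries ℤ) ^ (n + 1)) 1) ^ (n + 1)) M4)
    (h5 : PSHasProd (fun n => (invOfUnit (1 + (X : PowerSeries ℤ) ^ (4 * n + 5)) 1) ^ (n + 1)) M5)
    (h6 : PSHasProd (fun n => (invOfUnit (1 + (X : PowerSeries ℤ) ^ (4 * n + 3)) 1) ^ (n + 1)) M6)
    (h7 : PSHasProd (fun n => (invOfUnit (1 + (X : PowerSeries ℤ) ^ (4 * n + 7)) 1) ^ (n + 1)) M7)
    (h8 : PSHasProd (fun n => (invOfUnit (1 + (X : PowerSeries ℤ) ^ (4 * n + 1)) 1) ^ (n + 1)) M8) :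
    M1 ^ 4 * (M2 * M3) ^ 3 = M4 * (M5 * M6) ^ 3 * (M7 * M8) := by
  refine eq_of_forall_mk_span_X_pow_succ_eq fun k => ?_
  obtain ⟨N, hN, e1, e2, e3, e4, e5, e6, e7, e8⟩ := ((eventually_ge_atTop (k + 1)).and <|
    (h1.eventually_mk_prod_eq _).and <| (h2.eventually_mk_prod_eq _).and <|
    (h3.eventually_mk_prod_eq _).and <| (h4.eventually_mk_prod_eq _).and <|
    (h5.eventually_mk_prod_eq _).and <| (h6.eventually_mk_prod_eq _).and <|
    (h7.eventually_mk_prod_eq _).and (h8.eventually_mk_prod_eq _)).exists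
  simp only [map_mul, map_pow]
  rw [← e1, ← e2, ← e3, ← e4, ← e5, ← e6, ← e7, ← e8]
  simp only [map_prod, map_pow]
  exact z2z2_prod_eq_macmahon_prod (u := fun m => Ideal.Quotient.mk _ (invOfUnit (1 - X ^ m) 1))
    (v := fun m => Ideal.Quotient.mk _ (invOfUnit (1 + X ^ m) 1))
    (fun m hm => mk_span_X_pow_invOfUnit_one_sub_X_pow hm (by omega))
    (fun m hm => mk_span_X_pow_invOfUnit_one_add_X_pow hm (by omega))
    (fun m hm => by rw [← map_mul, invOfUnit_one_sub_X_pow_mul_invOfUnit_one_add_X_pow hm.ne'])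
    hN
end
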